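/- There exists a universal constant C such that for every n ≥ 2, every d ≥ 1, every ε ∈ (0,1), all reals 0 < a ≤ b, and every set V of n points in ℝ^d, there exists a finite set M of positive real numbers with |M| ≤ C·(n·d/ε)·log(2 + d·b/a), such that for every pair of distinct points x, y ∈ V and every real β ∈ [a,b], there is α ∈ M with α ≤ β·‖x−y‖ ≤ (1+ε)·α. -/

import Mathlib

open Finset

lemma floor_half (x : ℝ) : ⌊x / 2⌋ = ⌊(⌊x⌋ : ℝ) / 2⌋ := by
  apply le_antisymm
  · rw [Int.le_floor]
    have h0 := Int.floor_le (x / 2)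
    have h2 : (⌊x / 2⌋ * 2 : ℤ) ≤ ⌊x⌋ := by
      rw [Int.le_floor]; push_cast; linarith
    have h3 : ((⌊x / 2⌋ * 2 : ℤ) : ℝ) ≤ (⌊x⌋ : ℝ) := by exact_mod_cast h2
    push_cast at h3; linarith
  · exact Int.floor_mono (by
      have := Int.floor_le x; linarith)

/-- dyadic grid cell index -/
noncomputable def gcell (t : ℝ) (k : ℤ) (w : ℝ) : ℤ := ⌊(w - t) / (2:ℝ)^k⌋

noncomputable def gdiv (z : ℤ) : ℤ := ⌊((z:ℝ))/2⌋

lemma gcell_step (t : ℝ) (k : ℤ) (w : ℝ) :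
    gcell t (k+1) w = gdiv (gcell t k w) := by
  unfold gcell gdiv
  rw [← floor_half]
  congr 1
  rw [zpow_add_one₀ (two_ne_zero)]
  ring

lemma gimg_step (A : Finset ℝ) (t : ℝ) (k : ℤ) :
    A.image (gcell t (k+1)) = (A.image (gcell t k)).image gdiv := by
  rw [Finset.image_image]
  apply Finset.image_congr
  intro w _
  exact gcell_step t k w

lemma gimg_card_mono (A : Finset ℝ) (t : ℝ) (k : ℤ) :
    (A.image (gcell t (k+1))).card ≤ (A.image (gcell t k)).card := by
  rw [gimg_step]; exact Finset.card_image_le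

lemma gcell_sep (t : ℝ) (k : ℤ) {u v : ℝ} (h : (2:ℝ)^k ≤ u - v) :
    gcell t k v < gcell t k u := by
  have hp : (0:ℝ) < (2:ℝ)^k := zpow_pos two_pos k
  have h1 : (v - t) / (2:ℝ)^k + 1 ≤ (u - t) / (2:ℝ)^k := by
    rw [div_add' _ _ _ (ne_of_gt hp), div_le_div_iff₀ hp hp]
    nlinarith
  have := Int.floor_mono h1
  rw [Int.floor_add_one] at this
  unfold gcell
  omega

lemma gcell_boundary (t : ℝ) (k : ℤ) {u v : ℝ} (hvu : v ≤ u)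
    (h : gcell t k v ≠ gcell t k u) :
    ∃ N : ℤ, v < N * (2:ℝ)^k + t ∧ N * (2:ℝ)^k + t ≤ u := by
  have hp : (0:ℝ) < (2:ℝ)^k := zpow_pos two_pos k
  have hmono : gcell t k v ≤ gcell t k u :=
    Int.floor_mono (by gcongr)
  have hlt : gcell t k v < gcell t k u := lt_of_le_of_ne hmono h
  refine ⟨gcell t k u, ?_, ?_⟩
  · have h2 : (v - t) / (2:ℝ)^k < (gcell t k u : ℝ) := by
      have := Int.lt_floor_add_one ((v - t) / (2:ℝ)^k)
      unfold gcell at hlt ⊢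
      have : (v - t) / (2:ℝ)^k < (⌊(v - t) / (2:ℝ)^k⌋ : ℝ) + 1 :=
        Int.lt_floor_add_one _
      have hc : ((⌊(v - t) / (2:ℝ)^k⌋ : ℤ) : ℝ) + 1 ≤ ((⌊(u - t) / (2:ℝ)^k⌋ : ℤ) : ℝ) := by
        exact_mod_cast hlt
      linarith
    have := (div_lt_iff₀ hp).mp h2
    linarith
  · have h2 : ((gcell t k u : ℤ) : ℝ) ≤ (u - t) / (2:ℝ)^k := Int.floor_le _
    have := (le_div_iff₀ hp).mp h2
    linarith


lemma gcell_join (K k : ℤ) (hkK : k + 3 ≤ K) {u v : ℝ}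
    (h1 : (2:ℝ)^k ≤ u - v) (h2 : u - v < (2:ℝ)^(k+1)) :
    gcell 0 (k+3) u = gcell 0 (k+3) v ∨
    gcell ((2:ℝ)^K / 3) (k+3) u = gcell ((2:ℝ)^K / 3) (k+3) v := by
  set s : ℝ := (2:ℝ)^K / 3 with hs
  by_contra hcon
  push_neg at hcon
  obtain ⟨hne0, hne1⟩ := hcon
  have hk0 : (0:ℝ) < (2:ℝ)^k := zpow_pos two_pos k
  have hvu : v ≤ u := by linarith
  obtain ⟨N0, hb0l, hb0r⟩ := gcell_boundary 0 (k+3) hvu (Ne.symm hne0)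
  obtain ⟨N1, hb1l, hb1r⟩ := gcell_boundary s (k+3) hvu (Ne.symm hne1)
  set H : ℝ := (2:ℝ)^(k+3) with hH
  have hH8 : H = 8 * (2:ℝ)^k := by
    rw [hH, zpow_add₀ (two_ne_zero : (2:ℝ) ≠ 0)]; norm_num; ring
  -- j = K - (k+3) ≥ 0
  set j : ℤ := K - (k+3) with hj
  have hj0 : 0 ≤ j := by omega
  have h2K : (2:ℝ)^K = H * (2:ℝ)^j := by
    rw [hH, ← zpow_add₀ (two_ne_zero : (2:ℝ) ≠ 0)]; congr 1; omega
  have h2jnat : (2:ℝ)^j = ((2^(j.toNat) : ℤ) : ℝ) := by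
    push_cast
    rw [← zpow_natCast]
    congr 1
    omega
  -- integer fact: 3*(N0-N1) ≠ 2^(j.toNat)
  have hint : (3 * (N0 - N1) : ℤ) ≠ 2^(j.toNat) := by
    intro hEq
    have h3 : (3:ℤ) ∣ 2^(j.toNat) := ⟨N0 - N1, by linarith [hEq]⟩
    have hp3 : Prime (3:ℤ) := by norm_num
    have := hp3.dvd_of_dvd_pow h3
    norm_num at this
  have habs : (1:ℤ) ≤ |3 * (N0 - N1) - 2^(j.toNat)| :=
    Int.one_le_abs (sub_ne_zero.mpr hint)
  have habsR : (1:ℝ) ≤ |3 * ((N0:ℝ) - N1) - (2:ℝ)^j| := by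
    rw [h2jnat]
    exact_mod_cast habs
  -- b0 - b1 = (N0 - N1)*H - s
  have hdiff : (N0:ℝ) * H - ((N1:ℝ) * H + s) = H * (((N0:ℝ) - N1) - (2:ℝ)^j / 3) := by
    rw [hs, h2K]; ring
  have hHpos : (0:ℝ) < H := by rw [hH8]; linarith
  have hlow : H / 3 ≤ |(N0:ℝ) * H - ((N1:ℝ) * H + s)| := by
    rw [hdiff, abs_mul, abs_of_pos hHpos]
    have heq : ((N0:ℝ) - N1) - (2:ℝ)^j / 3 = (3 * ((N0:ℝ) - N1) - (2:ℝ)^j) / 3 := by ring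
    rw [heq, abs_div, abs_of_pos (show (0:ℝ) < 3 by norm_num)]
    calc H / 3 = H * (1 / 3) := by ring
    _ ≤ H * (|3 * ((N0:ℝ) - N1) - (2:ℝ)^j| / 3) := by
        apply mul_le_mul_of_nonneg_left _ hHpos.le
        linarith
  have hup : |(N0:ℝ) * H - ((N1:ℝ) * H + s)| ≤ u - v := by
    rw [abs_le]
    constructor <;> nlinarith
  have h2k1 : (2:ℝ)^(k+1) = 2 * (2:ℝ)^k := by
    rw [zpow_add_one₀ (two_ne_zero : (2:ℝ) ≠ 0)]; ring
  nlinarith [hlow, hup, h2, h2k1, hH8, hk0]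


lemma gcell_step3 (t : ℝ) (k : ℤ) (w : ℝ) :
    gcell t (k+3) w = gdiv (gdiv (gdiv (gcell t k w))) := by
  have e : k+3 = ((k+1)+1)+1 := by ring
  rw [e, gcell_step, gcell_step, gcell_step]

lemma gimg_card_mono3 (A : Finset ℝ) (t : ℝ) (k : ℤ) :
    (A.image (gcell t (k+3))).card ≤ (A.image (gcell t k)).card := by
  have e : k+3 = ((k+1)+1)+1 := by ring
  rw [e]
  exact le_trans (gimg_card_mono A t _) (le_trans (gimg_card_mono A t _) (gimg_card_mono A t _))

lemma card_image_collision {B : Finset ℤ} {G : ℤ → ℤ} {z1 z2 : ℤ}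
    (h1 : z1 ∈ B) (h2 : z2 ∈ B) (hne : z1 ≠ z2) (h : G z1 = G z2) :
    (B.image G).card + 1 ≤ B.card := by
  have hsub : B.image G ⊆ (B.erase z1).image G := by
    intro w hw
    obtain ⟨x, hx, rfl⟩ := mem_image.mp hw
    by_cases hxz : x = z1
    · subst hxz; exact mem_image.mpr ⟨z2, mem_erase.mpr ⟨hne.symm, h2⟩, h.symm⟩
    · exact mem_image.mpr ⟨x, mem_erase.mpr ⟨hxz, hx⟩, rfl⟩
  have hc1 := card_le_card hsub
  have hc2 := card_image_le (s := B.erase z1) (f := G)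
  have hc3 := card_erase_of_mem h1
  have hpos : 1 ≤ B.card := card_pos.mpr ⟨z1, h1⟩
  omega

lemma gimg_drop (A : Finset ℝ) (t : ℝ) (k : ℤ) {u v : ℝ} (hu : u ∈ A) (hv : v ∈ A)
    (hne : gcell t k u ≠ gcell t k v) (heq : gcell t (k+3) u = gcell t (k+3) v) :
    (A.image (gcell t (k+3))).card + 1 ≤ (A.image (gcell t k)).card := by
  have e : A.image (gcell t (k+3)) = (A.image (gcell t k)).image (fun z => gdiv (gdiv (gdiv z))) := by
    rw [Finset.image_image]
    apply Finset.image_congr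
    intro w _
    exact gcell_step3 t k w
  rw [e]
  exact card_image_collision (mem_image_of_mem _ hu) (mem_image_of_mem _ hv) hne
    (by rw [← gcell_step3, ← gcell_step3, heq])

/-- Key 1D lemma: the multiset of pairwise differences of a finite set of reals
hits at most `6n+4` dyadic scales. -/
lemma oneD (A : Finset ℝ) :
    (((A ×ˢ A).image fun q : ℝ × ℝ => Int.log 2 (q.1 - q.2)).card) ≤ 6 * A.card + 4 := by
  classical
  rcases A.eq_empty_or_nonempty with hAe | hA
  · simp [hAe]
  set K : ℤ := Int.log 2 (A.max' hA - A.min' hA) + 3 with hK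
  set s : ℝ := (2:ℝ)^K / 3 with hs
  set f : ℤ → ℕ := fun k => (A.image (gcell 0 k)).card + (A.image (gcell s k)).card with hf
  have fmono : ∀ k, f (k+1) ≤ f k := fun k =>
    add_le_add (gimg_card_mono A 0 k) (gimg_card_mono A s k)
  have fmonoN : ∀ (k : ℤ) (m : ℕ), f (k + m) ≤ f k := by
    intro k m
    induction m with
    | zero => simp
    | succ p ih =>
        have : (k + ((p+1 : ℕ) : ℤ)) = (k + p) + 1 := by push_cast; ring
        rw [this]
        exact le_trans (fmono (k + p)) ih
  have fmono' : ∀ k l : ℤ, k ≤ l → f l ≤ f k := by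
    intro k l h
    have : l = k + ((l - k).toNat : ℤ) := by omega
    rw [this]
    exact fmonoN k _
  have fbound : ∀ k, f k ≤ 2 * A.card := by
    intro k
    have := card_image_le (s := A) (f := gcell 0 k)
    have := card_image_le (s := A) (f := gcell s k)
    simp only [hf]
    omega
  have fdrop : ∀ k : ℤ, ∀ u ∈ A, ∀ v ∈ A, v < u → Int.log 2 (u - v) = k →
      f (k+3) + 1 ≤ f k := by
    intro k u hu v hv hvu hlog
    have hD : (0:ℝ) < u - v := by linarith
    have h1 : (2:ℝ)^k ≤ u - v := by
      have h := Int.zpow_log_le_self (b := 2) (R := ℝ) (by norm_num) hD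
      rw [hlog] at h
      exact_mod_cast h
    have h2 : u - v < (2:ℝ)^(k+1) := by
      have h := Int.lt_zpow_succ_log_self (b := 2) (R := ℝ) (by norm_num) (u - v)
      rw [hlog] at h
      exact_mod_cast h
    have hkK : k + 3 ≤ K := by
      have hle : u - v ≤ A.max' hA - A.min' hA :=
        sub_le_sub (A.le_max' u hu) (A.min'_le v hv)
      have := Int.log_mono_right (b := 2) hD hle
      omega
    have hsep0 : gcell 0 k v < gcell 0 k u := gcell_sep 0 k h1
    have hseps : gcell s k v < gcell s k u := gcell_sep s k h1
    rcases gcell_join K k hkK h1 h2 with hj | hj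
    · have hd := gimg_drop A 0 k hu hv (ne_of_gt hsep0) hj
      have hm := gimg_card_mono3 A s k
      simp only [hf]
      omega
    · have hd := gimg_drop A s k hu hv (ne_of_gt hseps) hj
      have hm := gimg_card_mono3 A 0 k
      simp only [hf]
      omega
  set S' : Finset ℤ :=
    ((A ×ˢ A).filter fun q : ℝ × ℝ => q.2 < q.1).image
      (fun q : ℝ × ℝ => Int.log 2 (q.1 - q.2)) with hS'
  have hS'drop : ∀ k ∈ S', f (k+3) + 1 ≤ f k := by
    intro k hk
    obtain ⟨q, hq, rfl⟩ := mem_image.mp hk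
    rw [mem_filter] at hq
    obtain ⟨hq1, hq2⟩ := hq
    rw [mem_product] at hq1
    exact fdrop _ q.1 hq1.1 q.2 hq1.2 hq2 rfl
  have hclass : ∀ r : ℤ, (S'.filter fun k => k % 3 = r).card ≤ 2 * A.card + 1 := by
    intro r
    have hmap : ∀ k ∈ (S'.filter fun k => k % 3 = r), f k ∈ Finset.Iic (2 * A.card) := by
      intro k _
      exact Finset.mem_Iic.mpr (fbound k)
    have hinj : (↑(S'.filter fun k => k % 3 = r) : Set ℤ).InjOn f := by
      intro k1 hk1 k2 hk2 hfeq
      by_contra hne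
      simp only [Finset.coe_filter, Set.mem_setOf_eq] at hk1 hk2
      rcases lt_trichotomy k1 k2 with hlt | heq | hlt
      · have h3 : k1 + 3 ≤ k2 := by omega
        have := le_trans (fmono' _ _ h3) (Nat.le_of_succ_le (hS'drop k1 hk1.1))
        have hdrop := hS'drop k1 hk1.1
        have := fmono' _ _ h3
        omega
      · exact hne heq
      · have h3 : k2 + 3 ≤ k1 := by omega
        have hdrop := hS'drop k2 hk2.1
        have := fmono' _ _ h3
        omega
    have := Finset.card_le_card_of_injOn f hmap hinj
    simpa [Nat.card_Iic] using this
  have hsplit : S' ⊆ ((S'.filter fun k => k % 3 = 0) ∪ (S'.filter fun k => k % 3 = 1))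
      ∪ (S'.filter fun k => k % 3 = 2) := by
    intro k hk
    simp only [Finset.mem_union, Finset.mem_filter]
    have : k % 3 = 0 ∨ k % 3 = 1 ∨ k % 3 = 2 := by omega
    tauto
  have hS'card : S'.card ≤ 6 * A.card + 3 := by
    have h1 := Finset.card_le_card hsplit
    have h2 := Finset.card_union_le ((S'.filter fun k => k % 3 = 0) ∪ (S'.filter fun k => k % 3 = 1)) (S'.filter fun k => k % 3 = 2)
    have h3 := Finset.card_union_le (S'.filter fun k => k % 3 = 0) (S'.filter fun k => k % 3 = 1)
    have := hclass 0
    have := hclass 1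
    have := hclass 2
    omega
  have hSsub : ((A ×ˢ A).image fun q : ℝ × ℝ => Int.log 2 (q.1 - q.2)) ⊆ insert 0 S' := by
    intro k hk
    obtain ⟨q, hq, rfl⟩ := mem_image.mp hk
    rcases lt_or_ge q.2 q.1 with h | h
    · exact mem_insert_of_mem (mem_image.mpr ⟨q, mem_filter.mpr ⟨hq, h⟩, rfl⟩)
    · have : Int.log 2 (q.1 - q.2) = 0 := Int.log_of_right_le_zero _ (by linarith)
      rw [this]
      exact mem_insert_self _ _
  calc ((A ×ˢ A).image fun q : ℝ × ℝ => Int.log 2 (q.1 - q.2)).card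
      ≤ (insert 0 S').card := Finset.card_le_card hSsub
    _ ≤ S'.card + 1 := Finset.card_insert_le _ _
    _ ≤ 6 * A.card + 4 := by omega

set_option maxHeartbeats 2000000

/-- There is a universal constant `C` such that for every set `V` of `n ≥ 2` points in
`ℝ^d`, every `ε ∈ (0,1)` and every interval `[a,b] ⊆ (0,∞)`, there is a finite set `M` of
positive reals of size at most `C·(n·d/ε)·log(2 + d·b/a)` such that for all distinct
`x, y ∈ V` and every `β ∈ [a,b]`, some `α ∈ M` satisfies `α ≤ β·‖x−y‖ ≤ (1+ε)·α`. -/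
theorem all_distances_net :
    ∃ C : ℝ, 0 < C ∧
      ∀ (n d : ℕ), 2 ≤ n → 1 ≤ d → ∀ ε : ℝ, 0 < ε → ε < 1 →
        ∀ a b : ℝ, 0 < a → a ≤ b →
          ∀ V : Finset (EuclideanSpace ℝ (Fin d)), V.card = n →
            ∃ M : Finset ℝ, (∀ α ∈ M, 0 < α) ∧
              (M.card : ℝ) ≤ C * ((n : ℝ) * d / ε) * Real.log (2 + d * b / a) ∧
              ∀ x ∈ V, ∀ y ∈ V, x ≠ y → ∀ β : ℝ, a ≤ β → β ≤ b →
                ∃ α ∈ M, α ≤ β * dist x y ∧ β * dist x y ≤ (1 + ε) * α := by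
  classical
  refine ⟨1000, by norm_num, ?_⟩
  intro n d hn hd ε hε0 hε1 a b ha hab V hV
  have hdR : (1:ℝ) ≤ (d:ℝ) := by exact_mod_cast hd
  have hnR : (2:ℝ) ≤ (n:ℝ) := by exact_mod_cast hn
  have hb : (0:ℝ) < b := lt_of_lt_of_le ha hab
  have hcast2 : ((2:ℕ):ℝ) = (2:ℝ) := by norm_num
  set Acoord : Fin d → Finset ℝ := fun i => V.image (fun x => x i) with hAcoord
  set Sc : Fin d → Finset ℤ := fun i =>
    ((Acoord i ×ˢ Acoord i).image fun q : ℝ × ℝ => Int.log 2 (q.1 - q.2)) with hSc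
  set U : Finset ℤ := Finset.univ.biUnion Sc with hU
  set La := Int.log 2 a with hLa
  set Lb := Int.log 2 b with hLb
  set Ld := Int.log 2 (d:ℝ) with hLd
  set O : Finset ℤ := Finset.Icc La (Lb + Ld + 2) with hO
  set J : ℕ := ⌈Real.log 2 / Real.log (1+ε)⌉₊ with hJ
  set M : Finset ℝ := ((U ×ˢ O) ×ˢ Finset.range J).image
      (fun q : (ℤ × ℤ) × ℕ => (2:ℝ)^(q.1.1 + q.1.2) * (1+ε)^q.2) with hM
  set L0 := Real.log (2 + (d:ℝ) * b / a) with hL0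
  have hba1 : (1:ℝ) ≤ b / a := (one_le_div ha).mpr hab
  have hdba : (1:ℝ) ≤ (d:ℝ) * b / a := by
    rw [mul_div_assoc]
    nlinarith
  have hL0_1 : 1 ≤ L0 := by
    rw [hL0, Real.le_log_iff_exp_le (by linarith)]
    have := Real.exp_one_lt_d9
    linarith
  have hlog2pos : (0:ℝ) < Real.log 2 := Real.log_pos one_lt_two
  refine ⟨M, ?_, ?_, ?_⟩
  · intro α hα
    obtain ⟨q, _, rfl⟩ := Finset.mem_image.mp hα
    positivity
  · -- cardinality bound
    have hMcard : M.card ≤ U.card * O.card * J := by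
      calc M.card ≤ ((U ×ˢ O) ×ˢ Finset.range J).card := Finset.card_image_le
        _ = U.card * O.card * J := by
            rw [Finset.card_product, Finset.card_product, Finset.card_range]
    have hUcard : U.card ≤ d * (8 * n) := by
      calc U.card ≤ ∑ i : Fin d, (Sc i).card := Finset.card_biUnion_le
        _ ≤ ∑ _i : Fin d, 8 * n := by
            apply Finset.sum_le_sum
            intro i _
            have h1 := oneD (Acoord i)
            have h2 : (Acoord i).card ≤ n := by
              rw [hAcoord]
              simpa [hV] using Finset.card_image_le (s := V) (f := fun x => x i)
            calc (Sc i).card ≤ 6 * (Acoord i).card + 4 := h1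
              _ ≤ 6 * n + 4 := by omega
              _ ≤ 8 * n := by omega
        _ = d * (8 * n) := by
            rw [Finset.sum_const, Finset.card_univ, Fintype.card_fin, smul_eq_mul]
    have hLaLb : La ≤ Lb := Int.log_mono_right ha hab
    have hLd0 : 0 ≤ Ld := by
      have h : Int.log 2 (1:ℝ) ≤ Int.log 2 (d:ℝ) := Int.log_mono_right one_pos hdR
      have h1 : Int.log 2 (1:ℝ) = 0 := by simp
      omega
    -- log bounds
    have hlogba : Real.log (b/a) ≤ L0 := by
      apply Real.log_le_log (div_pos hb ha)
      rw [mul_div_assoc]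
      nlinarith
    have hlogba0 : 0 ≤ Real.log (b/a) := Real.log_nonneg hba1
    have hlogd : Real.log d ≤ L0 := by
      apply Real.log_le_log (by linarith)
      rw [mul_div_assoc]
      nlinarith
    have hlogd0 : 0 ≤ Real.log d := Real.log_nonneg hdR
    have hOcard : (O.card : ℝ) ≤ 9 * L0 := by
      have hc : O.card = (Lb + Ld + 2 + 1 - La).toNat := Int.card_Icc _ _
      have hge : (0:ℤ) ≤ Lb + Ld + 2 + 1 - La := by omega
      have hcR : (O.card : ℝ) = ((Lb:ℝ) - La) + (Ld:ℝ) + 3 := by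
        rw [hc]
        have h9 : (((Lb + Ld + 2 + 1 - La).toNat : ℕ) : ℝ) = ((Lb + Ld + 2 + 1 - La : ℤ) : ℝ) := by
          rw [← Int.cast_natCast]
          exact congrArg _ (Int.toNat_of_nonneg hge)
        rw [h9]
        push_cast
        ring
      -- (Lb - La) * log 2 ≤ log (b/a) + log 2
      have h1 : (2:ℝ)^Lb ≤ b := by
        have := Int.zpow_log_le_self (b := 2) (R := ℝ) (by norm_num) hb
        rwa [hcast2] at this
      have h2 : a < (2:ℝ)^(La + 1) := by
        have := Int.lt_zpow_succ_log_self (b := 2) (R := ℝ) (by norm_num) a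
        rwa [hcast2] at this
      have h3 : (2:ℝ)^(Lb - La - 1) < b / a := by
        have he : (2:ℝ)^(Lb - La - 1) = (2:ℝ)^Lb / (2:ℝ)^(La+1) := by
          rw [← zpow_sub₀ (two_ne_zero : (2:ℝ) ≠ 0)]
          congr 1
          ring
        rw [he, div_lt_div_iff₀ (zpow_pos two_pos _) ha]
        nlinarith [zpow_pos (two_pos : (0:ℝ) < 2) Lb, zpow_pos (two_pos : (0:ℝ) < 2) (La+1)]
      have h4 : ((Lb:ℝ) - La - 1) * Real.log 2 ≤ Real.log (b/a) := by
        have := Real.log_le_log (zpow_pos two_pos _) h3.le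
        rwa [Real.log_zpow, show ((Lb - La - 1 : ℤ):ℝ) = (Lb:ℝ) - La - 1 by push_cast; ring] at this
      have h5 : (2:ℝ)^Ld ≤ (d:ℝ) := by
        have := Int.zpow_log_le_self (b := 2) (R := ℝ) (by norm_num) (by linarith : (0:ℝ) < d)
        rwa [hcast2] at this
      have h6 : (Ld:ℝ) * Real.log 2 ≤ Real.log d := by
        have := Real.log_le_log (zpow_pos two_pos _) h5
        rwa [Real.log_zpow] at this
      have hlog2lt : Real.log 2 < 0.6931471808 := Real.log_two_lt_d9
      have hlog2gt : (0.6931471803:ℝ) < Real.log 2 := Real.log_two_gt_d9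
      -- O.card * log 2 ≤ 6 * L0
      have h7 : (O.card : ℝ) * Real.log 2 ≤ 6 * L0 := by
        rw [hcR]
        have : (((Lb:ℝ) - La) + (Ld:ℝ) + 3) * Real.log 2
            = ((Lb:ℝ) - La - 1) * Real.log 2 + (Ld:ℝ) * Real.log 2 + 4 * Real.log 2 := by ring
        rw [this]
        have hlog2le1 : Real.log 2 ≤ 1 := by linarith
        linarith
      have hOc0 : (0:ℝ) ≤ (O.card:ℝ) := Nat.cast_nonneg _
      have h8 : (O.card:ℝ) * 0.6931471803 ≤ (O.card:ℝ) * Real.log 2 :=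
        mul_le_mul_of_nonneg_left hlog2gt.le hOc0
      linarith
    have hJR : (J:ℝ) ≤ 3 / ε := by
      have hlog1ε : ε / 2 ≤ Real.log (1+ε) := by
        have h := Real.log_le_sub_one_of_pos (x := (1+ε)⁻¹) (by positivity)
        rw [Real.log_inv] at h
        have h2 : (1+ε)⁻¹ - 1 = -(ε/(1+ε)) := by
          field_simp
          ring
        rw [h2] at h
        have h3 : ε / (1+ε) ≤ Real.log (1+ε) := by linarith
        have h4 : ε / 2 ≤ ε / (1+ε) := by
          rw [div_le_div_iff₀ (by norm_num) (by linarith)]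
          nlinarith
        linarith
      have hlogpos : (0:ℝ) < Real.log (1+ε) := Real.log_pos (by linarith)
      have h2 : (J:ℝ) < Real.log 2 / Real.log (1+ε) + 1 := by
        apply Nat.ceil_lt_add_one
        exact le_of_lt (div_pos hlog2pos hlogpos)
      have h3 : Real.log 2 / Real.log (1+ε) ≤ Real.log 2 / (ε/2) := by
        exact div_le_div_of_nonneg_left hlog2pos.le (by linarith) hlog1ε
      have hlog2lt : Real.log 2 < 0.6931471808 := Real.log_two_lt_d9
      have h4 : Real.log 2 / (ε/2) ≤ 1.4 / ε := by
        have he : Real.log 2 / (ε/2) = (2 * Real.log 2) / ε := by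
          field_simp
        rw [he]
        gcongr
        linarith
      have h5 : (1:ℝ) ≤ 1/ε := by
        rw [le_div_iff₀ hε0]; linarith
      have h6 : (1.4:ℝ)/ε + 1/ε = 2.4/ε := by ring
      have h8 : (2.4:ℝ)/ε ≤ 3/ε := by
        gcongr
        norm_num
      linarith
    have hchain : (M.card : ℝ) ≤ ((d:ℝ) * (8*n)) * (9 * L0) * (3/ε) := by
      have hc1 : (M.card : ℝ) ≤ (U.card : ℝ) * O.card * J := by exact_mod_cast hMcard
      have hc2 : (U.card : ℝ) ≤ (d:ℝ) * (8*n) := by exact_mod_cast hUcard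
      have hO0 : (0:ℝ) ≤ (O.card : ℝ) := by positivity
      have hJ0 : (0:ℝ) ≤ (J : ℝ) := by positivity
      calc (M.card : ℝ) ≤ (U.card : ℝ) * O.card * J := hc1
        _ ≤ ((d:ℝ) * (8*n)) * (9 * L0) * (3/ε) := by
            apply mul_le_mul
            · apply mul_le_mul hc2 hOcard hO0 (by positivity)
            · exact hJR
            · exact hJ0
            · positivity
    have heq : ((d:ℝ) * (8*n)) * (9 * L0) * (3/ε) = 216 * ((n:ℝ) * d / ε) * L0 := by
      ring
    rw [heq] at hchain
    calc (M.card : ℝ) ≤ 216 * ((n:ℝ) * d / ε) * L0 := hchain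
      _ ≤ 1000 * ((n:ℝ) * d / ε) * L0 := by
          apply mul_le_mul_of_nonneg_right ?_ (by linarith)
          apply mul_le_mul_of_nonneg_right (by norm_num) (by positivity)
  · -- covering
    intro x hx y hy hxy β hβa hβb
    have hdne : Nonempty (Fin d) := ⟨⟨0, hd⟩⟩
    obtain ⟨i, _, hi⟩ := Finset.exists_max_image Finset.univ (fun j => |x j - y j|)
      Finset.univ_nonempty
    set m := |x i - y i| with hm
    have hm0 : 0 < m := by
      by_contra h
      push_neg at h
      apply hxy
      refine PiLp.ext fun j => ?_
      have h1 := hi j (Finset.mem_univ j)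
      have h2 : |x j - y j| ≤ 0 := le_trans h1 h
      have h3 : |x j - y j| = 0 := le_antisymm h2 (abs_nonneg _)
      have := abs_eq_zero.mp h3
      linarith [sub_eq_zero.mp this]
    set D := dist x y with hD
    have hD0 : 0 < D := dist_pos.mpr hxy
    have hmD : m ≤ D := by
      rw [hD, EuclideanSpace.dist_eq]
      have h1 : m^2 ≤ ∑ j, dist (x j) (y j)^2 := by
        have h := Finset.single_le_sum (f := fun j => dist (x j) (y j)^2)
          (fun j _ => sq_nonneg _) (Finset.mem_univ i)
        have h' : dist (x i) (y i)^2 ≤ ∑ j, dist (x j) (y j)^2 := by simpa using h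
        rw [hm, ← Real.dist_eq]
        exact h'
      calc m = Real.sqrt (m^2) := (Real.sqrt_sq hm0.le).symm
        _ ≤ _ := Real.sqrt_le_sqrt h1
    have hDd : D ≤ (d:ℝ) * m := by
      rw [hD, EuclideanSpace.dist_eq]
      have h1 : ∑ j, dist (x j) (y j)^2 ≤ ((d:ℝ) * m)^2 := by
        calc ∑ j, dist (x j) (y j)^2 ≤ ∑ _j : Fin d, m^2 := by
              apply Finset.sum_le_sum
              intro j _
              rw [Real.dist_eq]
              have := hi j (Finset.mem_univ j)
              nlinarith [abs_nonneg (x j - y j)]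
          _ = (d:ℝ) * m^2 := by
              rw [Finset.sum_const, Finset.card_univ, Fintype.card_fin, nsmul_eq_mul]
          _ ≤ ((d:ℝ) * m)^2 := by nlinarith
      calc Real.sqrt (∑ j, dist (x j) (y j)^2) ≤ Real.sqrt (((d:ℝ)*m)^2) :=
            Real.sqrt_le_sqrt h1
        _ = (d:ℝ)*m := Real.sqrt_sq (by positivity)
    set k := Int.log 2 m with hk
    have hkU : k ∈ U := by
      rw [hU]
      apply Finset.mem_biUnion.mpr
      refine ⟨i, Finset.mem_univ i, ?_⟩
      rw [hSc]
      apply Finset.mem_image.mpr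
      rcases le_total (y i) (x i) with h | h
      · refine ⟨(x i, y i), Finset.mem_product.mpr
          ⟨Finset.mem_image_of_mem _ hx, Finset.mem_image_of_mem _ hy⟩, ?_⟩
        rw [hk, hm, abs_of_nonneg (by linarith : (0:ℝ) ≤ x i - y i)]
      · refine ⟨(y i, x i), Finset.mem_product.mpr
          ⟨Finset.mem_image_of_mem _ hy, Finset.mem_image_of_mem _ hx⟩, ?_⟩
        rw [hk, hm, abs_of_nonpos (by linarith : x i - y i ≤ (0:ℝ))]
        simp
    set T := β * D with hT
    have hβ0 : 0 < β := lt_of_lt_of_le ha hβa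
    have hT0 : 0 < T := mul_pos hβ0 hD0
    set p := Int.log 2 T with hp
    have h2k : (2:ℝ)^k ≤ m := by
      have := Int.zpow_log_le_self (b := 2) (R := ℝ) (by norm_num) hm0
      rwa [hcast2] at this
    have h2k1 : m < (2:ℝ)^(k+1) := by
      have := Int.lt_zpow_succ_log_self (b := 2) (R := ℝ) (by norm_num) m
      rwa [hcast2] at this
    have hpk_low : La + k ≤ p := by
      have ha2 : (2:ℝ)^La ≤ a := by
        have := Int.zpow_log_le_self (b := 2) (R := ℝ) (by norm_num) ha
        rwa [hcast2] at this
      have h1 : (2:ℝ)^(La + k) ≤ T := by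
        rw [zpow_add₀ (two_ne_zero : (2:ℝ) ≠ 0)]
        calc (2:ℝ)^La * (2:ℝ)^k ≤ a * m := by
              apply mul_le_mul ha2 h2k (by positivity) ha.le
          _ ≤ β * D := by
              apply mul_le_mul hβa hmD hm0.le hβ0.le
      calc La + k = Int.log 2 ((2:ℝ)^(La+k)) := by
            rw [← hcast2, Int.log_zpow (by norm_num : (1:ℕ) < 2)]
        _ ≤ p := Int.log_mono_right (zpow_pos two_pos _) h1
    have hpk_high : p ≤ k + Lb + Ld + 2 := by
      have hb2 : b < (2:ℝ)^(Lb+1) := by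
        have := Int.lt_zpow_succ_log_self (b := 2) (R := ℝ) (by norm_num) b
        rwa [hcast2] at this
      have hd2 : (d:ℝ) < (2:ℝ)^(Ld+1) := by
        have := Int.lt_zpow_succ_log_self (b := 2) (R := ℝ) (by norm_num) (d:ℝ)
        rwa [hcast2] at this
      have h1 : T < (2:ℝ)^(k + Lb + Ld + 3) := by
        have hTb : T ≤ b * ((d:ℝ) * m) := by
          calc T = β * D := rfl
            _ ≤ b * D := mul_le_mul_of_nonneg_right hβb hD0.le
            _ ≤ b * ((d:ℝ) * m) := mul_le_mul_of_nonneg_left hDd hb.le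
        have hstep : b * ((d:ℝ) * m) < (2:ℝ)^(Lb+1) * ((2:ℝ)^(Ld+1) * (2:ℝ)^(k+1)) := by
          have p1 : (0:ℝ) < (2:ℝ)^(Lb+1) := zpow_pos two_pos _
          have p2 : (0:ℝ) < (2:ℝ)^(Ld+1) := zpow_pos two_pos _
          calc b * ((d:ℝ)*m) < (2:ℝ)^(Lb+1) * ((d:ℝ)*m) := by
                apply mul_lt_mul_of_pos_right hb2
                positivity
            _ ≤ (2:ℝ)^(Lb+1) * ((2:ℝ)^(Ld+1)*m) := by
                apply mul_le_mul_of_nonneg_left ?_ p1.le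
                nlinarith
            _ < (2:ℝ)^(Lb+1) * ((2:ℝ)^(Ld+1) * (2:ℝ)^(k+1)) := by
                apply mul_lt_mul_of_pos_left ?_ p1
                exact mul_lt_mul_of_pos_left h2k1 p2
        have he : (2:ℝ)^(Lb+1) * ((2:ℝ)^(Ld+1) * (2:ℝ)^(k+1)) = (2:ℝ)^(k + Lb + Ld + 3) := by
          rw [← zpow_add₀ (two_ne_zero : (2:ℝ) ≠ 0), ← zpow_add₀ (two_ne_zero : (2:ℝ) ≠ 0)]
          congr 1
          ring
        rw [he] at hstep
        linarith
      have h2 := (Int.lt_zpow_iff_log_lt (b := 2) (R := ℝ) (by norm_num) hT0).mp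
        (by rwa [hcast2])
      omega
    have hpO : p - k ∈ O := by
      rw [hO]
      exact Finset.mem_Icc.mpr ⟨by omega, by omega⟩
    have h2p : (2:ℝ)^p ≤ T := by
      have := Int.zpow_log_le_self (b := 2) (R := ℝ) (by norm_num) hT0
      rwa [hcast2] at this
    have h2p1 : T < (2:ℝ)^(p+1) := by
      have := Int.lt_zpow_succ_log_self (b := 2) (R := ℝ) (by norm_num) T
      rwa [hcast2] at this
    have hJpos : 0 < J := by
      rw [hJ]
      apply Nat.ceil_pos.mpr
      have hlp : (0:ℝ) < Real.log (1+ε) := Real.log_pos (by linarith)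
      exact div_pos hlog2pos hlp
    set js := (Finset.range J).filter (fun j => (2:ℝ)^p * (1+ε)^j ≤ T) with hjs
    have h0js : (0:ℕ) ∈ js := by
      rw [hjs]
      apply Finset.mem_filter.mpr
      exact ⟨Finset.mem_range.mpr hJpos, by simpa using h2p⟩
    have hjsne : js.Nonempty := ⟨0, h0js⟩
    set j := js.max' hjsne with hj
    have hjmem := js.max'_mem hjsne
    obtain ⟨hjJ, hαT⟩ := Finset.mem_filter.mp hjmem
    refine ⟨(2:ℝ)^p * (1+ε)^j, ?_, hαT, ?_⟩
    · apply Finset.mem_image.mpr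
      refine ⟨((k, p - k), j), Finset.mem_product.mpr
        ⟨Finset.mem_product.mpr ⟨hkU, hpO⟩, hjJ⟩, ?_⟩
      have e : k + (p - k) = p := by ring
      simp only [e]
    · by_cases hcase : j + 1 < J
      · have hnot : ¬ ((2:ℝ)^p * (1+ε)^(j+1) ≤ T) := by
          intro hcon
          have hmem : j + 1 ∈ js := by
            rw [hjs]
            exact Finset.mem_filter.mpr ⟨Finset.mem_range.mpr hcase, hcon⟩
          have := js.le_max' _ hmem
          omega
        push_neg at hnot
        rw [pow_succ] at hnot
        calc T ≤ (2:ℝ)^p * ((1+ε)^j * (1+ε)) := hnot.le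
          _ = (1+ε) * ((2:ℝ)^p * (1+ε)^j) := by ring
      · have hjJ' : j + 1 = J := by
          have := Finset.mem_range.mp hjJ
          omega
        have h2J : (2:ℝ) ≤ (1+ε)^J := by
          have h1 : Real.log 2 / Real.log (1+ε) ≤ (J:ℝ) := Nat.le_ceil _
          have hlogpos : (0:ℝ) < Real.log (1+ε) := Real.log_pos (by linarith)
          have h2 : Real.log 2 ≤ (J:ℝ) * Real.log (1+ε) := by
            rw [div_le_iff₀ hlogpos] at h1
            linarith
          calc (2:ℝ) = Real.exp (Real.log 2) := (Real.exp_log two_pos).symm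
            _ ≤ Real.exp ((J:ℝ) * Real.log (1+ε)) := Real.exp_le_exp.mpr h2
            _ = (Real.exp (Real.log (1+ε)))^J := Real.exp_nat_mul _ J
            _ = (1+ε)^J := by rw [Real.exp_log (by linarith : (0:ℝ) < 1+ε)]
        have hp2pos : (0:ℝ) < (2:ℝ)^p := zpow_pos two_pos _
        calc T ≤ 2 * (2:ℝ)^p := by
              have he : (2:ℝ)^(p+1) = 2 * (2:ℝ)^p := by
                rw [zpow_add_one₀ (two_ne_zero : (2:ℝ) ≠ 0)]; ring
              linarith [he ▸ h2p1]
          _ ≤ (1+ε)^J * (2:ℝ)^p := by nlinarith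
          _ = (1+ε) * ((2:ℝ)^p * (1+ε)^j) := by
              rw [← hjJ', pow_succ]
              ring
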